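/- For every p ≥ 2, the Mycielski graph M_p has chromatic number p. -/

import Mathlib

/-- One step of the Mycielski construction: original vertices (`inl`),
shadow vertices (`inr (inl _)`), and an apex (`inr (inr _)`). -/
def mycielskiAdj {V : Type*} (G : SimpleGraph V) :
    (V ⊕ V ⊕ Unit) → (V ⊕ V ⊕ Unit) → Prop
  | Sum.inl u, Sum.inl v => G.Adj u v
  | Sum.inl u, Sum.inr (Sum.inl v) => G.Adj u v
  | Sum.inr (Sum.inl u), Sum.inl v => G.Adj u v
  | Sum.inr (Sum.inl _), Sum.inr (Sum.inr _) => True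
  | Sum.inr (Sum.inr _), Sum.inr (Sum.inl _) => True
  | _, _ => False

def mycielski {V : Type*} (G : SimpleGraph V) : SimpleGraph (V ⊕ V ⊕ Unit) where
  Adj := mycielskiAdj G
  symm := ⟨by
    rintro (u | u | u) (v | v | v) h <;> simp_all [mycielskiAdj] <;>
      exact G.adj_symm h⟩
  loopless := ⟨by
    rintro (u | u | u) h <;> simp_all [mycielskiAdj]⟩

/-- Vertex type of the Mycielski graph `M_(p+2)` (index shifted by 2). -/
def MycV : ℕ → Type
  | 0 => Fin 2
  | n + 1 => MycV n ⊕ MycV n ⊕ Unit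

/-- The Mycielski graph `M_(p+2)` (index shifted by 2): `MycG 0 = M_2 = K_2`. -/
def MycG : (n : ℕ) → SimpleGraph (MycV n)
  | 0 => ⊤
  | n + 1 => mycielski (MycG n)

instance instFintypeMycV : (n : ℕ) → Fintype (MycV n)
  | 0 => inferInstanceAs (Fintype (Fin 2))
  | n + 1 =>
    letI := instFintypeMycV n
    inferInstanceAs (Fintype (MycV n ⊕ MycV n ⊕ Unit))

open SimpleGraph in
lemma myc_up {V : Type*} {G : SimpleGraph V} {k : ℕ} (h : G.Colorable k) :
    (mycielski G).Colorable (k + 1) := by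
  obtain ⟨C⟩ := h
  refine ⟨SimpleGraph.Coloring.mk
    (fun x => match x with
      | Sum.inl v => (C v).castSucc
      | Sum.inr (Sum.inl v) => (C v).castSucc
      | Sum.inr (Sum.inr _) => Fin.last k) ?_⟩
  rintro (u | u | u) (v | v | v) h <;>
    simp only [mycielski, mycielskiAdj] at h
  · exact fun he => C.valid h (Fin.castSucc_injective _ he)
  · exact fun he => C.valid h (Fin.castSucc_injective _ he)
  · exact fun he => C.valid h (Fin.castSucc_injective _ he)
  · exact (Fin.castSucc_lt_last _).ne
  · exact (Fin.castSucc_lt_last _).ne'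

lemma myc_down {V : Type*} {G : SimpleGraph V} {k : ℕ}
    (h : (mycielski G).Colorable (k + 1)) : G.Colorable k := by
  obtain ⟨C⟩ := h
  set c := C (Sum.inr (Sum.inr ())) with hc
  have hsh : ∀ v : V, C (Sum.inr (Sum.inl v)) ≠ c := by
    intro v
    exact C.valid (show (mycielski G).Adj (Sum.inr (Sum.inl v)) (Sum.inr (Sum.inr ())) from
      trivial)
  let D : V → {x : Fin (k+1) // x ≠ c} := fun v =>
    if h : C (Sum.inl v) = c then ⟨C (Sum.inr (Sum.inl v)), hsh v⟩ else ⟨C (Sum.inl v), h⟩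
  have hvalid : ∀ {u v : V}, G.Adj u v → D u ≠ D v := by
    intro u v huv
    have h1 : C (Sum.inl u) ≠ C (Sum.inl v) := C.valid huv
    have h2 : C (Sum.inr (Sum.inl u)) ≠ C (Sum.inl v) := C.valid huv
    have h3 : C (Sum.inl u) ≠ C (Sum.inr (Sum.inl v)) := C.valid huv
    simp only [D]
    split_ifs with ha hb hb <;> simp only [Ne, Subtype.mk.injEq]
    · exact absurd (ha.trans hb.symm) h1
    · exact h2
    · exact h3
    · exact h1
  have Dc : G.Coloring {x : Fin (k+1) // x ≠ c} := SimpleGraph.Coloring.mk D hvalid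
  have := Dc.colorable
  rwa [show Fintype.card {x : Fin (k+1) // x ≠ c} = k by
    simp [Fintype.card_subtype_compl, Fintype.card_subtype_eq]] at this

open SimpleGraph in
lemma myc_main : ∀ n : ℕ, (MycG n).Colorable (n + 2) ∧ ¬ (MycG n).Colorable (n + 1)
  | 0 => by
    constructor
    · exact ⟨SimpleGraph.Coloring.mk id fun {u v} h => h.ne⟩
    · rintro ⟨C⟩
      exact C.valid (show (⊤ : SimpleGraph (Fin 2)).Adj 0 1 by simp)
        (Subsingleton.elim (α := Fin 1) _ _)
  | n + 1 => by
    obtain ⟨h1, h2⟩ := myc_main n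
    exact ⟨myc_up h1, fun h => h2 (myc_down h)⟩

open SimpleGraph in
theorem mycielski_chromatic_number (p : ℕ) (hp : 2 ≤ p) :
    (MycG (p - 2)).chromaticNumber = p := by
  set n := p - 2 with hn
  have hp2 : p = n + 2 := by omega
  obtain ⟨h1, h2⟩ := myc_main n
  have hle : (MycG n).chromaticNumber ≤ (n + 2 : ℕ) := h1.chromaticNumber_le
  have hnle : ¬ (MycG n).chromaticNumber ≤ (n + 1 : ℕ) := fun h =>
    h2 (SimpleGraph.chromaticNumber_le_iff_colorable.mp h)
  have hne : (MycG n).chromaticNumber ≠ ⊤ :=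
    (lt_of_le_of_lt hle (WithTop.coe_lt_top _)).ne
  lift (MycG n).chromaticNumber to ℕ using hne with m hm
  rw [Nat.cast_le] at hle
  rw [Nat.cast_le] at hnle
  rw [hp2]
  norm_cast
  omega
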